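/- arXiv:math/0703789 — 2 statements merged into one kernel-verified Lean document; each statement's English description precedes it below -/
import Mathlib

section
/- Let P = ∏_{i=1}^x p_i with x ≥ 2 and U the units of ℤ/Pℤ. For every even residue r mod P, the number of ordered pairs (a,b) ∈ U × U with a + b ≡ r (mod P) is at least ∏_{i=2}^x (p_i - 2). -/
open Finset

lemma local_count {p : ℕ} [NeZero p] (c : ZMod p) :
    p - 2 ≤ Fintype.card {y : ZMod p // y ≠ 0 ∧ y ≠ c} := by
  have h1 : (univ.filter (fun y : ZMod p => y ≠ 0 ∧ y ≠ c)) = univ \ {0, c} := by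
    ext y; simp [and_comm]
  have h2 : ({0, c} : Finset (ZMod p)).card ≤ 2 := card_insert_le _ _ |>.trans (by simp)
  rw [Fintype.card_subtype, h1, card_sdiff_of_subset (subset_univ _), card_univ, ZMod.card]
  exact Nat.sub_le_sub_left h2 p


lemma isUnit_pi_iff' {ι : Type*} {M : ι → Type*} [∀ i, Monoid (M i)] {f : ∀ i, M i} :
    IsUnit f ↔ ∀ i, IsUnit (f i) := by
  constructor
  · intro h i; exact h.map (Pi.evalMonoidHom M i)
  · intro h
    refine ⟨⟨f, fun i => ((h i).unit⁻¹ : (M i)ˣ), ?_, ?_⟩, rfl⟩ <;>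
      · ext i
        simp [Pi.mul_apply]

lemma ringEquiv_isUnit_iff {R S : Type*} [CommRing R] [CommRing S] (e : R ≃+* S) (a : R) :
    IsUnit (e a) ↔ IsUnit a :=
  ⟨fun h => by simpa using h.map e.symm.toRingHom, fun h => h.map e.toRingHom⟩

theorem stmt6 (x : ℕ) (hx : 2 ≤ x) (P : ℕ)
    (hP : P = ∏ i ∈ Finset.range x, Nat.nth Nat.Prime i) [NeZero P]
    (N : ℕ) (hN : Even N) :
    ∏ i ∈ Finset.Ico 1 x, (Nat.nth Nat.Prime i - 2) ≤
      ((Finset.univ : Finset ((ZMod P)ˣ × (ZMod P)ˣ)).filter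
        (fun q => ((q.1 : ZMod P) + (q.2 : ZMod P)) = (N : ZMod P))).card := by
  classical
  set p : ℕ → ℕ := fun i => Nat.nth Nat.Prime i with hp
  have hprime : ∀ i, (p i).Prime := fun i => Nat.prime_nth_prime i
  haveI : ∀ i : Fin x, Fact (p i).Prime := fun i => ⟨hprime i⟩
  haveI : ∀ i : ℕ, NeZero (p i) := fun i => ⟨(hprime i).pos.ne'⟩
  have hP' : P = ∏ i : Fin x, p i := by
    rw [hP, Fin.prod_univ_eq_prod_range]
  have hcop : Pairwise (Function.onFun Nat.Coprime fun i : Fin x => p i) := by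
    intro i j hij
    exact (Nat.coprime_primes (hprime i) (hprime j)).mpr
      (fun h => hij (Fin.ext ((Nat.nth_injective Nat.infinite_setOf_prime) h)))
  let e : ZMod P ≃+* ∀ i : Fin x, ZMod (p i) :=
    (ZMod.ringEquivCongr hP').trans (ZMod.prodEquivPi _ hcop)
  -- condition on ZMod P
  let C : ZMod P → Prop := fun a => IsUnit a ∧ IsUnit ((N : ZMod P) - a)
  -- step 1: card of subtype C ≤ pairs filter card
  have step1 : Fintype.card {a : ZMod P // C a} ≤
      ((Finset.univ : Finset ((ZMod P)ˣ × (ZMod P)ˣ)).filter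
        (fun q => ((q.1 : ZMod P) + (q.2 : ZMod P)) = (N : ZMod P))).card := by
    rw [Fintype.card_subtype]
    apply Finset.card_le_card_of_injOn
      (fun a => if h : C a then (h.1.unit, h.2.unit) else 1)
    · intro a ha
      simp only [coe_filter, mem_filter, mem_univ, true_and, Set.mem_setOf_eq] at ha ⊢
      rw [dif_pos ha]
      simp [IsUnit.unit_spec]
    · intro a ha b hb hab
      simp only [coe_filter, mem_univ, true_and, Set.mem_setOf_eq] at ha hb
      simp only [dif_pos ha, dif_pos hb] at hab
      have := congrArg (fun q => ((q.1 : (ZMod P)ˣ) : ZMod P)) hab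
      simpa [IsUnit.unit_spec] using this
  -- step 2: transport C across e
  have hCiff : ∀ a : ZMod P, C a ↔ ∀ i : Fin x, e a i ≠ 0 ∧ e a i ≠ (N : ZMod (p i)) := by
    intro a
    have h1 : IsUnit a ↔ ∀ i, e a i ≠ 0 := by
      rw [← ringEquiv_isUnit_iff e a, isUnit_pi_iff']
      exact forall_congr' fun i => isUnit_iff_ne_zero
    have h2 : IsUnit ((N : ZMod P) - a) ↔ ∀ i, e a i ≠ (N : ZMod (p i)) := by
      rw [← ringEquiv_isUnit_iff e _, isUnit_pi_iff']
      refine forall_congr' fun i => ?_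
      rw [map_sub, map_natCast]
      simp only [Pi.sub_apply, Pi.natCast_apply]
      rw [isUnit_iff_ne_zero, sub_ne_zero]
      exact ne_comm
    rw [show C a ↔ _ ∧ _ from Iff.rfl, h1, h2, ← forall_and]
  -- step 3: count via pi
  have step3 : (∏ i : Fin x, Fintype.card
      {y : ZMod (p i) // y ≠ 0 ∧ y ≠ (N : ZMod (p i))}) =
      Fintype.card {a : ZMod P // C a} := by
    rw [← Fintype.card_pi]
    refine Fintype.card_congr ?_
    exact (Equiv.subtypePiEquivPi.symm).trans
      ((e.toEquiv.subtypeEquiv hCiff).symm)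
  -- step 4: lower bound the product
  have hfin : ∀ i : Fin x, 1 ≤ Fintype.card
      {y : ZMod (p i) // y ≠ 0 ∧ y ≠ (N : ZMod (p i))} := by
    intro i
    rcases Nat.eq_zero_or_pos (i : ℕ) with h0 | h1
    · -- p i = 2, N even so N = 0 in ZMod 2
      refine Fintype.card_pos_iff.mpr ⟨1, ?_, ?_⟩
      · exact one_ne_zero
      · have hp2 : p (i : ℕ) = 2 := by rw [h0]; exact Nat.nth_prime_zero_eq_two
        intro h
        have : ((N : ZMod (p (i : ℕ)))) = 0 := by
          have : (p (i:ℕ)) ∣ N := by rw [hp2]; exact hN.two_dvd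
          exact (ZMod.natCast_eq_zero_iff _ _).mpr this
        rw [this] at h
        exact one_ne_zero h
    · calc 1 ≤ p (i : ℕ) - 2 := by
            have h3 : 3 ≤ p (i : ℕ) := by
              have hne : p (i : ℕ) ≠ 2 := by
                intro h
                have := Nat.nth_injective Nat.infinite_setOf_prime
                  (h.trans Nat.nth_prime_zero_eq_two.symm)
                omega
              have := (hprime (i : ℕ)).two_le
              omega
            omega
        _ ≤ _ := local_count _
  calc ∏ i ∈ Finset.Ico 1 x, (p i - 2)
      ≤ ∏ i ∈ Finset.Ico 1 x, Fintype.card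
          {y : ZMod (p i) // y ≠ 0 ∧ y ≠ (N : ZMod (p i))} := by
        refine Finset.prod_le_prod' ?_
        intro i _
        haveI : NeZero (p i) := ⟨(hprime i).pos.ne'⟩
        exact local_count _
    _ ≤ ∏ i ∈ Finset.range x, Fintype.card
          {y : ZMod (p i) // y ≠ 0 ∧ y ≠ (N : ZMod (p i))} := by
        refine Finset.prod_le_prod_of_subset_of_one_le' ?_ ?_
        · rw [range_eq_Ico]; exact Finset.Ico_subset_Ico (by omega) le_rfl
        · intro i hi _
          haveI : NeZero (p i) := ⟨(hprime i).pos.ne'⟩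
          rw [mem_range] at hi
          exact hfin ⟨i, hi⟩
    _ = ∏ i : Fin x, Fintype.card
          {y : ZMod (p i) // y ≠ 0 ∧ y ≠ (N : ZMod (p i))} := by
        exact (Fin.prod_univ_eq_prod_range
          (fun i => Fintype.card {y : ZMod (p i) // y ≠ 0 ∧ y ≠ (N : ZMod (p i))}) x).symm
    _ = Fintype.card {a : ZMod P // C a} := step3
    _ ≤ _ := step1
end

section
/- The product ∏_{i=2}^x (1 - 2/p_i) · (p_x^2 + 1)/4 tends to infinity as x → ∞, where p_i is the i-th prime. -/
/-!
Consecutive odd primes differ by at least 2, so `1 - 2 / p_i ≥ p_{i-1} / p_i` for `i ≥ 2`, and the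
product telescopes: `∏_{i=1}^{n} (1 - 2 / p_i) ≥ (1/3) · (3 / p_n) = 1 / p_n`. Hence the expression
is at least `(p_n ^ 2 + 1) / (4 p_n) ≥ p_n / 4`, which tends to infinity.
-/

open Filter Finset

lemma div_le_prod_one_sub_two_div {a : ℕ → ℝ} (ha : ∀ k, 0 < a k) {m : ℕ}
    (hgap : ∀ k, m ≤ k → a k + 2 ≤ a (k + 1)) {n : ℕ} (hmn : m ≤ n) :
    a m / a n ≤ ∏ i ∈ Ico (m + 1) (n + 1), (1 - 2 / a i) := by
  induction n, hmn using Nat.le_induction with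
  | base => simp [(ha m).ne']
  | succ n hmn ih =>
    have hn := ha n
    have hn1 := ha (n + 1)
    have hstep : a n / a (n + 1) ≤ 1 - 2 / a (n + 1) := by
      rw [one_sub_div hn1.ne']
      gcongr
      linarith [hgap n hmn]
    rw [prod_Ico_succ_top (by omega)]
    calc a m / a (n + 1) = a m / a n * (a n / a (n + 1)) := by field_simp
      _ ≤ (∏ i ∈ Ico (m + 1) (n + 1), (1 - 2 / a i)) * (1 - 2 / a (n + 1)) :=
        mul_le_mul ih hstep (by positivity) ((div_pos (ha m) hn).le.trans ih)

lemma Nat.nth_prime_add_two_le_nth_prime_succ {n : ℕ} (hn : n ≠ 0) :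
    Nat.nth Nat.Prime n + 2 ≤ Nat.nth Nat.Prime (n + 1) := by
  have hlt : Nat.nth Nat.Prime n < Nat.nth Nat.Prime (n + 1) :=
    Nat.nth_strictMono Nat.infinite_setOfPred_prime n.lt_succ_self
  have hodd {k : ℕ} (hk : k ≠ 0) : Odd (Nat.nth Nat.Prime k) := by
    refine (Nat.prime_nth_prime k).odd_of_ne_two fun h => hk ?_
    rw [← Nat.nth_prime_zero_eq_two] at h
    exact Nat.nth_injective Nat.infinite_setOfPred_prime h
  obtain ⟨a, ha⟩ := hodd hn
  obtain ⟨b, hb⟩ := hodd (by omega : n + 1 ≠ 0)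
  omega

lemma one_div_nth_prime_le_prod_one_sub_two_div {n : ℕ} (hn : 1 ≤ n) :
    1 / (Nat.nth Nat.Prime n : ℝ) ≤ ∏ i ∈ Ico 1 (n + 1), (1 - 2 / (Nat.nth Nat.Prime i : ℝ)) := by
  have hpos (k : ℕ) : (0 : ℝ) < Nat.nth Nat.Prime k := by exact_mod_cast (Nat.prime_nth_prime k).pos
  have hgap (k : ℕ) (hk : 1 ≤ k) :
      (Nat.nth Nat.Prime k : ℝ) + 2 ≤ Nat.nth Nat.Prime (k + 1) := by
    exact_mod_cast Nat.nth_prime_add_two_le_nth_prime_succ (by omega)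
  have htail := div_le_prod_one_sub_two_div hpos hgap hn
  rw [prod_eq_prod_Ico_succ_bot (by omega)]
  rw [Nat.nth_prime_one_eq_three] at htail ⊢
  push_cast at htail ⊢
  calc 1 / (Nat.nth Nat.Prime n : ℝ) = (1 - 2 / 3) * (3 / Nat.nth Nat.Prime n) := by
        field_simp; norm_num
    _ ≤ _ := by gcongr

theorem stmt13 :
    Filter.Tendsto
      (fun x : ℕ =>
        (∏ i ∈ Finset.Ico 1 x, (1 - 2 / (Nat.nth Nat.Prime i : ℝ))) *
          (((Nat.nth Nat.Prime (x - 1) : ℝ)) ^ 2 + 1) / 4)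
      Filter.atTop Filter.atTop := by
  rw [← tendsto_add_atTop_iff_nat 1]
  simp only [Nat.add_sub_cancel]
  have hprime : Tendsto (fun n => (Nat.nth Nat.Prime n : ℝ)) atTop atTop :=
    tendsto_natCast_atTop_atTop.comp (Nat.nth_strictMono Nat.infinite_setOfPred_prime).tendsto_atTop
  refine tendsto_atTop_mono' atTop ?_ (hprime.atTop_div_const (by norm_num : (0 : ℝ) < 4))
  filter_upwards [eventually_ge_atTop 1] with n hn
  have hp : (0 : ℝ) < Nat.nth Nat.Prime n := by exact_mod_cast (Nat.prime_nth_prime n).pos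
  calc (Nat.nth Nat.Prime n : ℝ) / 4
      ≤ 1 / (Nat.nth Nat.Prime n : ℝ) * ((Nat.nth Nat.Prime n : ℝ) ^ 2 + 1) / 4 := by
        rw [one_div_mul_eq_div, div_div, le_div_iff₀ (by positivity)]
        nlinarith
    _ ≤ _ := by gcongr; exact one_div_nth_prime_le_prod_one_sub_two_div hn
end
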